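/- arXiv:1706.09136 — 3 statements merged into one kernel-verified Lean document; each statement's English description precedes it below -/
import Mathlib

section
/- For every prime p > 3, in (ZMod p)[t] one has £^{OY}_{(1,1,1)}(t) = (1/6) £_1(t)^3 + (1/3) Z(1,2) \cdot t^p (1-t)^p, where Z(1,2) := \sum_{0<n_1<n_2<p} n_1^{-1} n_2^{-2} in ZMod p. -/
/-!
Averaging over the swap of `l₁, l₂` and using `a⁻¹ (a + b)⁻¹ + b⁻¹ (a + b)⁻¹ = a⁻¹ b⁻¹` turns
`£^OY_{(1,1,1)}` into `½ ∑ (l₁ l₂)⁻¹ (l₁ + l₂ + l₃)⁻¹ t^(l₁ + l₂ + l₃)`, up to the terms with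
`l₁ + l₂ = p`, which add up to a multiple of `∑ l⁻² = 0`. Averaging the latter over cyclic
permutations and using `a⁻¹ b⁻¹ + b⁻¹ c⁻¹ + c⁻¹ a⁻¹ = (a + b + c) / (a b c)` gives `⅓ £₁³`, minus
the terms with `l₁ + l₂ + l₃ ∈ {p, 2p}`. The reflection `l ↦ p - l` exchanges these two cases up
to sign; for `l₁ + l₂ + l₃ = p`, eliminating `l₃` and splitting `(l₁ l₂ (l₁ + l₂))⁻¹` into partial
fractions produces `-2 Z(1,2)`. Finally `t^p - t^(2p) = t^p (1 - t)^p` by Frobenius.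
-/

open Polynomial Finset

/-- £₁(t). -/
noncomputable def L1 (p : ℕ) : Polynomial (ZMod p) :=
  ∑ l ∈ Ico 1 p, C ((l : ZMod p)⁻¹) * X ^ l

/-- £^OY_{(1,1,1)} with tˢ replaced by uˢ for a polynomial u. -/
noncomputable def OY111 (p : ℕ) (u : Polynomial (ZMod p)) : Polynomial (ZMod p) :=
  ∑ l1 ∈ Ico 1 p, ∑ l2 ∈ Ico 1 p, ∑ l3 ∈ Ico 1 p,
    if ¬ p ∣ l1 ∧ ¬ p ∣ (l1 + l2) ∧ ¬ p ∣ (l1 + l2 + l3) then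
      C ((l1 : ZMod p)⁻¹ * ((l1 + l2 : ℕ) : ZMod p)⁻¹ * ((l1 + l2 + l3 : ℕ) : ZMod p)⁻¹)
        * u ^ (l1 + l2 + l3)
    else 0

/-- The finite double zeta value ζ(1,2) mod p. -/
def Z12 (p : ℕ) : ZMod p :=
  ∑ n2 ∈ Ico 1 p, ∑ n1 ∈ Ico 1 n2, (n1 : ZMod p)⁻¹ * ((n2 : ZMod p)⁻¹) ^ 2

section FieldIdentities

variable {K : Type*} [Field K]

lemma inv_add_inv_mul_inv_add [DecidableEq K] {a b : K} (ha : a ≠ 0) (hb : b ≠ 0) :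
    (a⁻¹ + b⁻¹) * (a + b)⁻¹ = if a + b = 0 then 0 else a⁻¹ * b⁻¹ := by
  split_ifs with h
  · simp [h]
  · field_simp; ring

lemma cyclic_inv_mul_inv_sum_mul_inv_add_add [DecidableEq K] {a b c : K}
    (ha : a ≠ 0) (hb : b ≠ 0) (hc : c ≠ 0) :
    (a⁻¹ * b⁻¹ + b⁻¹ * c⁻¹ + c⁻¹ * a⁻¹) * (a + b + c)⁻¹
      = if a + b + c = 0 then 0 else a⁻¹ * b⁻¹ * c⁻¹ := by
  split_ifs with h
  · simp [h]
  · field_simp; ring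

lemma inv_mul_inv_mul_inv_add {a b : K} (ha : a ≠ 0) (hb : b ≠ 0) :
    a⁻¹ * b⁻¹ * (a + b)⁻¹ = a⁻¹ * ((a + b)⁻¹) ^ 2 + b⁻¹ * ((a + b)⁻¹) ^ 2 := by
  rcases eq_or_ne (a + b) 0 with h | h
  · simp [h]
  · field_simp; ring

end FieldIdentities

lemma Finset.sum_sum_sum_rotate {α M : Type*} [AddCommMonoid M] (s : Finset α)
    (f : α → α → α → M) :
    ∑ a ∈ s, ∑ b ∈ s, ∑ c ∈ s, f a b c = ∑ a ∈ s, ∑ b ∈ s, ∑ c ∈ s, f b c a := by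
  symm
  rw [Finset.sum_comm]
  exact Finset.sum_congr rfl fun _ _ => Finset.sum_comm

lemma Finset.sum_Ico_one_reflect {M : Type*} [AddCommMonoid M] (p : ℕ) (f : ℕ → M) :
    ∑ a ∈ Ico 1 p, f (p - a) = ∑ a ∈ Ico 1 p, f a := by
  rw [Finset.sum_Ico_reflect f 1 (by omega), Nat.add_sub_cancel_left, Nat.add_sub_cancel]

namespace ZMod

lemma sum_Ico_one_natCast {p : ℕ} [NeZero p] {M : Type*} [AddCommMonoid M] (f : ZMod p → M)
    (hf : f 0 = 0) : ∑ a ∈ Ico 1 p, f a = ∑ x : ZMod p, f x := by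
  have h : ∑ a ∈ range p, f a = ∑ x : ZMod p, f x :=
    Finset.sum_nbij' (↑) ZMod.val (by simp) (by simp [ZMod.val_lt])
      (fun a ha => ZMod.val_cast_of_lt (mem_range.1 ha)) (by simp) (by simp)
  rw [← h, range_eq_Ico, Finset.sum_eq_sum_Ico_succ_bot (NeZero.pos p)]
  simp [hf]

lemma sum_Ico_one_inv_sq {p : ℕ} [Fact p.Prime] (h3 : 3 < p) :
    ∑ a ∈ Ico 1 p, ((a : ZMod p)⁻¹) ^ 2 = 0 := by
  rw [sum_Ico_one_natCast (fun x : ZMod p => x⁻¹ ^ 2) (by simp),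
    Fintype.sum_equiv (Equiv.inv (ZMod p)) (fun x => x⁻¹ ^ 2) (· ^ 2) (fun _ => rfl)]
  exact FiniteField.sum_pow_lt_card_sub_one _ 2 (by rw [ZMod.card]; omega)

variable {p : ℕ}

lemma natCast_ne_zero_of_mem_Ico {a : ℕ} (ha : a ∈ Ico 1 p) : (a : ZMod p) ≠ 0 := by
  rw [mem_Ico] at ha
  rw [Ne, natCast_eq_zero_iff]
  exact Nat.not_dvd_of_pos_of_lt ha.1 ha.2

lemma natCast_sub_self {a : ℕ} (ha : a ≤ p) : ((p - a : ℕ) : ZMod p) = -a := by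
  rw [Nat.cast_sub ha, natCast_self, zero_sub]

lemma natCast_eq_zero_iff_of_lt_two_mul {n : ℕ} (h0 : 0 < n) (h : n < 2 * p) :
    (n : ZMod p) = 0 ↔ n = p := by
  rw [natCast_eq_zero_iff]
  exact ⟨fun hd => Nat.eq_of_dvd_of_lt_two_mul h0.ne' hd h, fun h => h ▸ dvd_rfl⟩

lemma natCast_eq_zero_iff_of_lt_three_mul {n : ℕ} (h0 : 0 < n) (h : n < 3 * p) :
    (n : ZMod p) = 0 ↔ n = p ∨ n = 2 * p := by
  rw [natCast_eq_zero_iff]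
  constructor
  · rintro ⟨k, rfl⟩
    have hk : k < 3 := by nlinarith
    interval_cases k <;> omega
  · rintro (rfl | rfl) <;> simp

end ZMod

noncomputable def invMonomial (p n : ℕ) : (ZMod p)[X] := C ((n : ZMod p)⁻¹) * X ^ n

def tripleInvSum (p n : ℕ) : ZMod p :=
  ∑ a ∈ Ico 1 p, ∑ b ∈ Ico 1 p, ∑ c ∈ Ico 1 p,
    if a + b + c = n then (a : ZMod p)⁻¹ * (b : ZMod p)⁻¹ * (c : ZMod p)⁻¹ else 0

-- The divisibility conditions in `OY111` are redundant because `(0 : ZMod p)⁻¹ = 0`.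
lemma OY111_X_eq_sum (p : ℕ) :
    OY111 p X = ∑ a ∈ Ico 1 p, ∑ b ∈ Ico 1 p, ∑ c ∈ Ico 1 p,
      C ((a : ZMod p)⁻¹ * ((a + b : ℕ) : ZMod p)⁻¹) * invMonomial p (a + b + c) := by
  unfold OY111
  refine sum_congr rfl fun a _ => sum_congr rfl fun b _ => sum_congr rfl fun c _ => ?_
  split_ifs with h
  · rw [invMonomial, ← mul_assoc, ← C_mul]
  · simp only [not_and_or, not_not, ← ZMod.natCast_eq_zero_iff] at h
    rcases h with h | h | h <;> simp only [invMonomial, h, ZMod.inv_zero, mul_zero, zero_mul, C_0]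

lemma sum_Ico_ite_natCast_add_eq_zero {M : Type*} [AddCommMonoid M] {p a : ℕ} (ha : a ∈ Ico 1 p)
    (f : ℕ → M) :
    ∑ b ∈ Ico 1 p, (if ((a + b : ℕ) : ZMod p) = 0 then f b else 0) = f (p - a) := by
  rw [mem_Ico] at ha
  have hcond : ∀ b ∈ Ico 1 p, ((a + b : ℕ) : ZMod p) = 0 ↔ p - a = b := fun b hb => by
    rw [mem_Ico] at hb
    rw [ZMod.natCast_eq_zero_iff_of_lt_two_mul (by omega) (by omega)]
    omega
  rw [sum_congr rfl fun b hb => if_congr (hcond b hb) rfl rfl, sum_ite_eq,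
    if_pos (by rw [mem_Ico]; omega)]

lemma C_ite_natCast_eq_zero_mul_X_pow {p n : ℕ} (h0 : 0 < n) (h : n < 3 * p) (y : ZMod p) :
    C (if (n : ZMod p) = 0 then 0 else y) * X ^ n
      = C y * X ^ n - C (if n = p then y else 0) * X ^ p
        - C (if n = 2 * p then y else 0) * X ^ (2 * p) := by
  by_cases hn : (n : ZMod p) = 0
  · rcases (ZMod.natCast_eq_zero_iff_of_lt_three_mul h0 h).1 hn with rfl | rfl
    · rw [if_neg (by omega : n ≠ 2 * n)]; simp
    · rw [if_neg (by omega : 2 * p ≠ p)]; simp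
  · obtain ⟨hp, h2p⟩ : n ≠ p ∧ n ≠ 2 * p := by
      rw [ZMod.natCast_eq_zero_iff_of_lt_three_mul h0 h] at hn
      omega
    simp [hn, hp, h2p]

lemma L1_pow_three (p : ℕ) :
    L1 p ^ 3 = ∑ a ∈ Ico 1 p, ∑ b ∈ Ico 1 p, ∑ c ∈ Ico 1 p,
      C ((a : ZMod p)⁻¹ * (b : ZMod p)⁻¹ * (c : ZMod p)⁻¹) * X ^ (a + b + c) := by
  simp only [pow_three, L1, sum_mul, mul_sum, C_mul, pow_add]
  refine sum_congr rfl fun a _ => sum_congr rfl fun b _ => sum_congr rfl fun c _ => ?_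
  ring

lemma sum_Ico_ite_add_lt {M : Type*} [AddCommMonoid M] (p : ℕ) (f : ℕ → ℕ → M) :
    ∑ a ∈ Ico 1 p, ∑ b ∈ Ico 1 p, (if a + b < p then f a (a + b) else 0)
      = ∑ n ∈ Ico 1 p, ∑ a ∈ Ico 1 n, f a n := by
  calc _ = ∑ a ∈ Ico 1 p, ∑ n ∈ Ico (1 + a) p, f a n :=
        sum_congr rfl fun a ha => by
          rw [← sum_filter, show {b ∈ Ico 1 p | a + b < p} = Ico 1 (p - a) by ext; simp; omega,
            sum_Ico_add, Nat.sub_add_cancel (mem_Ico.1 ha).2.le]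
    _ = _ := sum_comm' fun a n => by simp only [mem_Ico]; omega

variable {p : ℕ} [Fact p.Prime]

lemma two_mul_OY111_X :
    2 * OY111 p X = ∑ a ∈ Ico 1 p, ∑ b ∈ Ico 1 p, ∑ c ∈ Ico 1 p,
        C ((a : ZMod p)⁻¹ * (b : ZMod p)⁻¹) * invMonomial p (a + b + c)
      - ∑ a ∈ Ico 1 p, ∑ b ∈ Ico 1 p, ∑ c ∈ Ico 1 p,
        if ((a + b : ℕ) : ZMod p) = 0
        then C ((a : ZMod p)⁻¹ * (b : ZMod p)⁻¹) * invMonomial p (a + b + c) else 0 := by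
  rw [OY111_X_eq_sum, two_mul]
  nth_rw 2 [sum_comm]
  simp only [← sum_add_distrib, ← sum_sub_distrib]
  refine sum_congr rfl fun a ha => sum_congr rfl fun b hb => sum_congr rfl fun c _ => ?_
  rw [add_comm b a, ← add_mul, ← C_add, ← add_mul, Nat.cast_add,
    inv_add_inv_mul_inv_add (ZMod.natCast_ne_zero_of_mem_Ico ha)
      (ZMod.natCast_ne_zero_of_mem_Ico hb)]
  split_ifs <;> simp

lemma sum_ite_natCast_add_eq_zero_mul_invMonomial_eq_zero (h3 : 3 < p) :
    ∑ a ∈ Ico 1 p, ∑ b ∈ Ico 1 p, ∑ c ∈ Ico 1 p,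
        (if ((a + b : ℕ) : ZMod p) = 0
        then C ((a : ZMod p)⁻¹ * (b : ZMod p)⁻¹) * invMonomial p (a + b + c) else 0) = 0 := by
  calc _ = ∑ a ∈ Ico 1 p, ∑ c ∈ Ico 1 p,
        C ((a : ZMod p)⁻¹ * ((p - a : ℕ) : ZMod p)⁻¹) * invMonomial p (a + (p - a) + c) :=
        sum_congr rfl fun a ha => by
          rw [sum_comm]
          exact sum_congr rfl fun c _ => sum_Ico_ite_natCast_add_eq_zero ha
            (fun b => C ((a : ZMod p)⁻¹ * (b : ZMod p)⁻¹) * invMonomial p (a + b + c))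
    _ = ∑ a ∈ Ico 1 p, C (-((a : ZMod p)⁻¹ ^ 2)) * ∑ c ∈ Ico 1 p, invMonomial p (p + c) :=
        sum_congr rfl fun a ha => by
          have hap : a ≤ p := (mem_Ico.1 ha).2.le
          rw [ZMod.natCast_sub_self hap, Nat.add_sub_cancel' hap, mul_sum, inv_neg, mul_neg, sq]
    _ = 0 := by
        rw [← sum_mul, ← map_sum, sum_neg_distrib, ZMod.sum_Ico_one_inv_sq h3, neg_zero, C_0,
          zero_mul]

lemma three_mul_sum_C_inv_mul_inv_mul_invMonomial :
    3 * ∑ a ∈ Ico 1 p, ∑ b ∈ Ico 1 p, ∑ c ∈ Ico 1 p,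
        C ((a : ZMod p)⁻¹ * (b : ZMod p)⁻¹) * invMonomial p (a + b + c)
      = L1 p ^ 3 - C (tripleInvSum p p) * X ^ p - C (tripleInvSum p (2 * p)) * X ^ (2 * p) := by
  rw [(by norm_num : (3 : (ZMod p)[X]) = 1 + 1 + 1), add_mul, add_mul, one_mul]
  nth_rw 2 [sum_sum_sum_rotate]
  nth_rw 3 [sum_sum_sum_rotate, sum_sum_sum_rotate]
  simp only [← sum_add_distrib, L1_pow_three, tripleInvSum, map_sum, sum_mul, ← sum_sub_distrib]
  refine sum_congr rfl fun a ha => sum_congr rfl fun b hb => sum_congr rfl fun c hc => ?_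
  have hs : 0 < a + b + c ∧ a + b + c < 3 * p := by simp only [mem_Ico] at ha hb hc; omega
  rw [← C_ite_natCast_eq_zero_mul_X_pow hs.1 hs.2, show b + c + a = a + b + c by ring,
    show c + a + b = a + b + c by ring, ← add_mul, ← add_mul, ← C_add, ← C_add, invMonomial,
    ← mul_assoc, ← C_mul, Nat.cast_add, Nat.cast_add,
    cyclic_inv_mul_inv_sum_mul_inv_add_add (ZMod.natCast_ne_zero_of_mem_Ico ha)
      (ZMod.natCast_ne_zero_of_mem_Ico hb) (ZMod.natCast_ne_zero_of_mem_Ico hc)]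

lemma tripleInvSum_self : tripleInvSum p p = -(2 * Z12 p) := by
  calc tripleInvSum p p = ∑ a ∈ Ico 1 p, ∑ b ∈ Ico 1 p,
        if a + b < p then (a : ZMod p)⁻¹ * (b : ZMod p)⁻¹ * ((p - (a + b) : ℕ) : ZMod p)⁻¹
        else 0 :=
        sum_congr rfl fun a ha => sum_congr rfl fun b hb => by
          simp only [mem_Ico] at ha hb
          rw [sum_congr rfl fun c hc => if_congr
              (show a + b + c = p ↔ p - (a + b) = c by rw [mem_Ico] at hc; omega) rfl rfl,
            sum_ite_eq]
          exact if_congr (by rw [mem_Ico]; omega) rfl rfl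
    _ = -(∑ a ∈ Ico 1 p, ∑ b ∈ Ico 1 p,
          ((if a + b < p then (a : ZMod p)⁻¹ * ((a + b : ℕ) : ZMod p)⁻¹ ^ 2 else 0)
            + if b + a < p then (b : ZMod p)⁻¹ * ((b + a : ℕ) : ZMod p)⁻¹ ^ 2 else 0)) := by
        simp only [← sum_neg_distrib]
        refine sum_congr rfl fun a ha => sum_congr rfl fun b hb => ?_
        rw [add_comm b a, ← ite_add_zero]
        split_ifs with h
        · rw [ZMod.natCast_sub_self h.le, inv_neg, mul_neg, Nat.cast_add,
            inv_mul_inv_mul_inv_add (ZMod.natCast_ne_zero_of_mem_Ico ha)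
              (ZMod.natCast_ne_zero_of_mem_Ico hb)]
        · rw [neg_zero]
    _ = -(2 * Z12 p) := by
        rw [sum_congr rfl fun _ _ => sum_add_distrib, sum_add_distrib, sum_comm (f := fun a b =>
          if b + a < p then (b : ZMod p)⁻¹ * ((b + a : ℕ) : ZMod p)⁻¹ ^ 2 else 0),
          ← two_mul, sum_Ico_ite_add_lt p (fun a n => (a : ZMod p)⁻¹ * (n : ZMod p)⁻¹ ^ 2), Z12]

lemma tripleInvSum_two_mul : tripleInvSum p (2 * p) = -tripleInvSum p p := by
  calc tripleInvSum p (2 * p) = ∑ a ∈ Ico 1 p, ∑ b ∈ Ico 1 p, ∑ c ∈ Ico 1 p,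
        if (p - a) + (p - b) + (p - c) = 2 * p
        then ((p - a : ℕ) : ZMod p)⁻¹ * ((p - b : ℕ) : ZMod p)⁻¹ * ((p - c : ℕ) : ZMod p)⁻¹
        else 0 := by
        rw [tripleInvSum, ← sum_Ico_one_reflect]
        refine sum_congr rfl fun a _ => ?_
        rw [← sum_Ico_one_reflect]
        refine sum_congr rfl fun b _ => ?_
        rw [← sum_Ico_one_reflect]
    _ = ∑ a ∈ Ico 1 p, ∑ b ∈ Ico 1 p, ∑ c ∈ Ico 1 p,
        -(if a + b + c = p then (a : ZMod p)⁻¹ * (b : ZMod p)⁻¹ * (c : ZMod p)⁻¹ else 0) :=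
        sum_congr rfl fun a ha => sum_congr rfl fun b hb => sum_congr rfl fun c hc => by
          simp only [mem_Ico] at ha hb hc
          rw [if_congr (show p - a + (p - b) + (p - c) = 2 * p ↔ a + b + c = p by omega) rfl rfl,
            ZMod.natCast_sub_self ha.2.le, ZMod.natCast_sub_self hb.2.le,
            ZMod.natCast_sub_self hc.2.le, inv_neg, inv_neg, inv_neg]
          split_ifs
          · ring
          · rw [neg_zero]
    _ = -tripleInvSum p p := by simp only [tripleInvSum, sum_neg_distrib]

theorem OY111_formula (p : ℕ) (hp : p.Prime) (h3 : 3 < p) :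
    OY111 p X = C ((6 : ZMod p)⁻¹) * (L1 p) ^ 3
      + C ((3 : ZMod p)⁻¹ * Z12 p) * X ^ p * (1 - X) ^ p := by
  have : Fact p.Prime := ⟨hp⟩
  have h2 : (2 : ZMod p) ≠ 0 := by
    exact_mod_cast ZMod.natCast_ne_zero_of_mem_Ico (p := p) (a := 2) (by rw [mem_Ico]; omega)
  have h3' : (3 : ZMod p) ≠ 0 := by
    exact_mod_cast ZMod.natCast_ne_zero_of_mem_Ico (p := p) (a := 3) (by rw [mem_Ico]; omega)
  have h6 : (6 : ZMod p) ≠ 0 := by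
    rw [show (6 : ZMod p) = 2 * 3 by norm_num]
    exact mul_ne_zero h2 h3'
  have hfrob : X ^ p * (1 - X) ^ p = (X ^ p - X ^ (2 * p) : (ZMod p)[X]) := by
    rw [sub_pow_char, one_pow, mul_sub, mul_one, ← pow_add, two_mul]
  have key : C 6 * OY111 p X = L1 p ^ 3 + C (2 * Z12 p) * (X ^ p * (1 - X) ^ p) := by
    rw [show (C 6 : (ZMod p)[X]) = 3 * 2 by rw [map_ofNat]; norm_num, mul_assoc,
      two_mul_OY111_X, sum_ite_natCast_add_eq_zero_mul_invMonomial_eq_zero h3, sub_zero,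
      three_mul_sum_C_inv_mul_inv_mul_invMonomial, tripleInvSum_two_mul, tripleInvSum_self, hfrob]
    simp only [map_neg, map_mul, neg_neg]
    ring
  calc OY111 p X = C (6 : ZMod p)⁻¹ * (C 6 * OY111 p X) := by
        rw [← mul_assoc, ← C_mul, inv_mul_cancel₀ h6, C_1, one_mul]
    _ = _ := by
        rw [key, mul_add, ← mul_assoc (C _), ← C_mul,
          show (6 : ZMod p)⁻¹ * (2 * Z12 p) = 3⁻¹ * Z12 p by field_simp; ring]
        ring
end

section
/- (Shuffle relation, depth (1,1) case) For every prime p > 3, in (ZMod p)[t]: £_1(t)^2 = 2 £^{OY}_{(1,1)}(t) - Z(2) t^p, where Z(2) := \sum_{0<l<p} l^{-2}. In particular, since Z(2) = 0 for p > 3, £_1(t)^2 = 2 £^{OY}_{(1,1)}(t). -/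
/-!
Expanding the square gives `L1 p ^ 2 = ∑ l1⁻¹ l2⁻¹ t^(l1 + l2)` over `0 < l1, l2 < p`, while
symmetrizing `OY11` in `l1, l2` gives `2 OY11 p = ∑ (l1⁻¹ + l2⁻¹) (l1 + l2)⁻¹ t^(l1 + l2)`.
By partial fractions the two summands agree unless `l1 + l2 = p`, where the second vanishes and the
first is `l1⁻¹ (-l1)⁻¹ t^p = -l1⁻² t^p`; this gives the `Z(2) t^p` term. Finally
`Z(2) = ∑_{x ≠ 0} x⁻² = ∑_{x ≠ 0} x²` is a power sum over `𝔽_p` of exponent `2 < p - 1`, hence `0`.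
-/

open Polynomial Finset

/-- £^OY_{(1,1)}(t). -/
noncomputable def OY11 (p : ℕ) : Polynomial (ZMod p) :=
  ∑ l1 ∈ Ico 1 p, ∑ l2 ∈ Ico 1 p,
    if ¬ p ∣ (l1 + l2) then
      C ((l1 : ZMod p)⁻¹ * ((l1 + l2 : ℕ) : ZMod p)⁻¹) * X ^ (l1 + l2)
    else 0

theorem FiniteField.sum_inv_pow_lt_card_sub_one {K : Type*} [Field K] [Fintype K] (i : ℕ)
    (h : i < Fintype.card K - 1) : ∑ x : K, x⁻¹ ^ i = 0 :=
  (Equiv.sum_comp (Equiv.inv K) (· ^ i)).trans (FiniteField.sum_pow_lt_card_sub_one K i h)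

theorem ZMod.sum_range_natCast {n : ℕ} [NeZero n] {M : Type*} [AddCommMonoid M]
    (f : ZMod n → M) : ∑ l ∈ range n, f l = ∑ x : ZMod n, f x :=
  sum_nbij' (fun l => (l : ZMod n)) ZMod.val (fun _ _ => mem_univ _)
    (fun x _ => mem_range.2 (ZMod.val_lt x))
    (fun _ hl => ZMod.val_cast_of_lt (mem_range.1 hl)) (fun x _ => ZMod.natCast_zmod_val x)
    (fun _ _ => rfl)

theorem ZMod.sum_Ico_one_inv_pow_eq_zero {p k : ℕ} [Fact p.Prime] (hk0 : k ≠ 0)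
    (hk : k < p - 1) : ∑ l ∈ Ico 1 p, ((l : ZMod p)⁻¹) ^ k = 0 := by
  have hsum := FiniteField.sum_inv_pow_lt_card_sub_one (K := ZMod p) k (by rwa [ZMod.card])
  rw [← ZMod.sum_range_natCast (fun x => x⁻¹ ^ k), range_eq_Ico,
    sum_eq_sum_Ico_succ_bot (Fact.out : p.Prime).pos] at hsum
  simpa [hk0] using hsum

theorem ZMod.natCast_ne_zero_of_mem_Ico_s13 {p l : ℕ} (hl : l ∈ Ico 1 p) : (l : ZMod p) ≠ 0 := by
  rw [mem_Ico] at hl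
  rw [Ne, ZMod.natCast_eq_zero_iff]
  exact Nat.not_dvd_of_pos_of_lt hl.1 hl.2

theorem ZMod.natCast_add_natCast_eq_zero_iff_of_mem_Ico {p l1 l2 : ℕ} (hl1 : l1 ∈ Ico 1 p)
    (hl2 : l2 ∈ Ico 1 p) : (l1 : ZMod p) + l2 = 0 ↔ l2 = p - l1 := by
  rw [mem_Ico] at hl1 hl2
  rw [← Nat.cast_add, ZMod.natCast_eq_zero_iff]
  constructor
  · intro h
    have := Nat.eq_of_dvd_of_lt_two_mul (by omega) h (by omega)
    omega
  · intro h
    rw [h, Nat.add_sub_cancel' hl1.2.le]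

-- Partial fractions `1/(ab) = 1/(a(a+b)) + 1/(b(a+b))`, and their defect when `a + b = 0`.
theorem inv_mul_inv_sub_inv_add_inv_mul_inv_add {K : Type*} [Field K] [DecidableEq K] {a b : K}
    (ha : a ≠ 0) (hb : b ≠ 0) :
    a⁻¹ * b⁻¹ - (a⁻¹ + b⁻¹) * (a + b)⁻¹ = if a + b = 0 then -a⁻¹ ^ 2 else 0 := by
  split_ifs with hab
  · rw [hab, inv_zero, mul_zero, sub_zero, eq_neg_of_add_eq_zero_right hab, inv_neg]
    ring
  · field_simp
    ring

theorem L1_sq (p : ℕ) : L1 p ^ 2 = ∑ l1 ∈ Ico 1 p, ∑ l2 ∈ Ico 1 p,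
    C ((l1 : ZMod p)⁻¹ * (l2 : ZMod p)⁻¹) * X ^ (l1 + l2) := by
  simp only [L1, sq, sum_mul_sum, map_mul, pow_add]
  exact sum_congr rfl fun _ _ => sum_congr rfl fun _ _ => by ring

-- The condition `¬ p ∣ l1 + l2` in `OY11` is redundant: otherwise `(l1 + l2 : ZMod p)⁻¹ = 0⁻¹ = 0`.
theorem OY11_eq_sum (p : ℕ) : OY11 p = ∑ l1 ∈ Ico 1 p, ∑ l2 ∈ Ico 1 p,
    C ((l1 : ZMod p)⁻¹ * ((l1 : ZMod p) + l2)⁻¹) * X ^ (l1 + l2) := by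
  refine sum_congr rfl fun l1 _ => sum_congr rfl fun l2 _ => ?_
  rw [← Nat.cast_add, ite_not, ite_eq_right_iff]
  intro h
  rw [← ZMod.natCast_eq_zero_iff] at h
  rw [h, ZMod.inv_zero, mul_zero, map_zero, zero_mul]

theorem two_mul_OY11 (p : ℕ) : 2 * OY11 p = ∑ l1 ∈ Ico 1 p, ∑ l2 ∈ Ico 1 p,
    C (((l1 : ZMod p)⁻¹ + (l2 : ZMod p)⁻¹) * ((l1 : ZMod p) + l2)⁻¹) * X ^ (l1 + l2) := by
  have hswap := OY11_eq_sum p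
  rw [sum_comm] at hswap
  rw [two_mul]
  nth_rw 1 [OY11_eq_sum p]
  rw [hswap, ← sum_add_distrib]
  refine sum_congr rfl fun l1 _ => ?_
  rw [← sum_add_distrib]
  refine sum_congr rfl fun l2 _ => ?_
  rw [add_comm l2 l1, add_comm (l2 : ZMod p), ← add_mul, ← map_add, add_mul]

theorem L1_sq_sub_two_mul_OY11 (p : ℕ) [Fact p.Prime] :
    L1 p ^ 2 - 2 * OY11 p = -C (∑ l ∈ Ico 1 p, ((l : ZMod p)⁻¹) ^ 2) * X ^ p := by
  rw [L1_sq, two_mul_OY11, ← sum_sub_distrib, ← map_neg C, ← sum_neg_distrib, map_sum, sum_mul]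
  refine sum_congr rfl fun l1 hl1 => ?_
  have hl1p : l1 + (p - l1) = p := Nat.add_sub_cancel' (mem_Ico.1 hl1).2.le
  have hmem : p - l1 ∈ Ico 1 p := by rw [mem_Ico] at hl1 ⊢; omega
  calc ∑ l2 ∈ Ico 1 p, C ((l1 : ZMod p)⁻¹ * (l2 : ZMod p)⁻¹) * X ^ (l1 + l2) -
        ∑ l2 ∈ Ico 1 p,
          C (((l1 : ZMod p)⁻¹ + (l2 : ZMod p)⁻¹) * ((l1 : ZMod p) + l2)⁻¹) * X ^ (l1 + l2)
      = ∑ l2 ∈ Ico 1 p, if l2 = p - l1 then C (-(l1 : ZMod p)⁻¹ ^ 2) * X ^ (l1 + l2) else 0 := by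
        rw [← sum_sub_distrib]
        refine sum_congr rfl fun l2 hl2 => ?_
        rw [← sub_mul, ← map_sub, inv_mul_inv_sub_inv_add_inv_mul_inv_add
          (ZMod.natCast_ne_zero_of_mem_Ico_s13 hl1) (ZMod.natCast_ne_zero_of_mem_Ico_s13 hl2)]
        simp only [ZMod.natCast_add_natCast_eq_zero_iff_of_mem_Ico hl1 hl2]
        split_ifs <;> simp
    _ = C (-(l1 : ZMod p)⁻¹ ^ 2) * X ^ p := by rw [sum_ite_eq', if_pos hmem, hl1p]

theorem shuffle_depth_one_one (p : ℕ) (hp : p.Prime) (h3 : 3 < p) :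
    (L1 p) ^ 2 = 2 * OY11 p - C (∑ l ∈ Ico 1 p, ((l : ZMod p)⁻¹) ^ 2) * X ^ p
      ∧ (L1 p) ^ 2 = 2 * OY11 p := by
  have : Fact p.Prime := ⟨hp⟩
  have hshuffle := L1_sq_sub_two_mul_OY11 p
  rw [neg_mul, sub_eq_iff_eq_add', ← sub_eq_add_neg] at hshuffle
  refine ⟨hshuffle, ?_⟩
  rw [hshuffle, ZMod.sum_Ico_one_inv_pow_eq_zero two_ne_zero (by omega), map_zero, zero_mul,
    sub_zero]
end

section
/- For every prime p > 3 and positive integer n < p, the telescoping recurrence F_k(t) = F_{k+1}(t) + £^{OY}_{(1)^n}(t) - (\sum_{i=1}^{n-k-1} Z^{(i)}((1)^{n-k-2},2) t^{ip}) £^{OY}_{(1)^k}(t) - (\sum_{i=1}^{n-k-2} Z^{(i)}((1)^{n-k-2}) t^{ip}) £^{OY}_{(2,(1)^k)}(t) holds in (ZMod p)[t] for 0 \le k \le n-2, where F_k(t) := £^{OY}((1)^{n-k-1}; (1); (1)^k; t) is the mixed finite multiple polylogarithm of type ((1)^{n-k-1}, (1), (1)^k). -/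
open Polynomial Finset

/-- The finite multiple polylogarithm of Ono–Yamamoto type £^OY_k(t) for an index
`k : Fin r → ℕ`, as a polynomial over `ZMod p`. The sum ranges over tuples
`l` with `0 < lᵢ < p` such that every partial sum `l₁ + ⋯ + lⱼ` is prime to `p`. -/
noncomputable def OY (p r : ℕ) (k : Fin r → ℕ) : Polynomial (ZMod p) :=
  ∑ l ∈ Fintype.piFinset (fun _ : Fin r => Finset.Ico 1 p),
    if ∀ j : Fin r, ¬ p ∣ ∑ i ∈ Finset.Iic j, l i then
      C (∏ j : Fin r, (((∑ i ∈ Finset.Iic j, l i : ℕ) : ZMod p)⁻¹) ^ k j) * X ^ (∑ i, l i)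
    else 0

/-- The variant `Z^(i)(k)` of finite multiple zeta values: the sum over tuples with
`(i-1)p < l₁ + ⋯ + l_r < i p` and all partial sums prime to `p`. -/
noncomputable def Zi (p r : ℕ) (k : Fin r → ℕ) (i : ℕ) : ZMod p :=
  ∑ l ∈ Fintype.piFinset (fun _ : Fin r => Finset.Ico 1 p),
    if (i - 1) * p < (∑ j, l j) ∧ (∑ j, l j) < i * p
        ∧ (∀ j : Fin r, ¬ p ∣ ∑ i' ∈ Finset.Iic j, l i') then
      ∏ j : Fin r, (((∑ i' ∈ Finset.Iic j, l i' : ℕ) : ZMod p)⁻¹) ^ k j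
    else 0

/-- Mixed finite multiple polylogarithm £^OY(λ; μ; ν; t) of Ono–Yamamoto. -/
noncomputable def OYmixed (p a b c : ℕ) (lam : Fin a → ℕ) (mu : Fin b → ℕ) (nu : Fin c → ℕ) :
    Polynomial (ZMod p) :=
  ∑ l ∈ Fintype.piFinset (fun _ : Fin a => Finset.Ico 1 p),
    ∑ m ∈ Fintype.piFinset (fun _ : Fin b => Finset.Ico 1 p),
      ∑ n ∈ Fintype.piFinset (fun _ : Fin c => Finset.Ico 1 p),
        if (∀ x : Fin a, ¬ p ∣ ∑ i ∈ Finset.Iic x, l i) ∧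
            (∀ y : Fin b, ¬ p ∣ ∑ i ∈ Finset.Iic y, m i) ∧
            (∀ z : Fin c, ¬ p ∣ ((∑ i, l i) + (∑ i, m i) + ∑ i ∈ Finset.Iic z, n i)) then
          C ((∏ x : Fin a, (((∑ i ∈ Finset.Iic x, l i : ℕ) : ZMod p)⁻¹) ^ lam x) *
              (∏ y : Fin b, (((∑ i ∈ Finset.Iic y, m i : ℕ) : ZMod p)⁻¹) ^ mu y) *
              (∏ z : Fin c,
                ((((∑ i, l i) + (∑ i, m i) + ∑ i ∈ Finset.Iic z, n i : ℕ) : ZMod p)⁻¹) ^ nu z))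
            * X ^ ((∑ i, l i) + (∑ i, m i) + ∑ i, n i)
        else 0

/-!
With `n = a + k + 2`, every term of the recurrence is a sum over
`(l, m, ν) ∈ [1, p)^(a+1) × [1, p) × [1, p)^k` of
`(L₁ ⋯ L_a)⁻¹ g(A, m) ∏_z (A + m + N_z)⁻¹ t^(A + m + N_k)` with `A = L_(a+1)`: the kernel `g` is
`A⁻¹ m⁻¹` for `F_k`, `m⁻¹ (A + m)⁻¹` for `F_(k+1)` (whose first `ν`-entry becomes `l_(a+1)`) and
`A⁻¹ (A + m)⁻¹` for `£_((1)^n)`. As `0⁻¹ = 0` in `ZMod p`, the coprimality conditions in the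
definitions can be dropped, and the partial fraction identity
`A⁻¹ m⁻¹ = m⁻¹ (A + m)⁻¹ + A⁻¹ (A + m)⁻¹` only fails when `p ∣ A` or `p ∣ A + m`. These defects
are the two `Z^(i)` terms: if `(i - 1) p < A < i p`, the unique `m ∈ [1, p)` with `p ∣ A + m`
gives `t^(A + m) = t^(i p)`.
-/

section TupleSums
variable {α M : Type*} [AddCommMonoid M] {r : ℕ} (s : Finset α)

lemma sum_piFinset_fin_one (f : (Fin 1 → α) → M) :
    ∑ v ∈ Fintype.piFinset (fun _ : Fin 1 => s), f v = ∑ x ∈ s, f (fun _ => x) :=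
  Finset.sum_equiv (Equiv.funUnique (Fin 1) α) (by simp [Fin.forall_fin_one])
    (fun v _ => congrArg f (funext fun i => congrArg v (Subsingleton.elim i default)))

lemma sum_piFinset_cons (f : (Fin (r + 1) → α) → M) :
    ∑ v ∈ Fintype.piFinset (fun _ : Fin (r + 1) => s), f v
      = ∑ x ∈ s, ∑ w ∈ Fintype.piFinset (fun _ : Fin r => s), f (Fin.cons x w) := by
  rw [← sum_product']
  exact (Finset.sum_equiv (Fin.consEquiv fun _ => α) (by simp [Fin.forall_fin_succ])
    (fun _ _ => rfl)).symm

lemma sum_piFinset_snoc (f : (Fin (r + 1) → α) → M) :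
    ∑ v ∈ Fintype.piFinset (fun _ : Fin (r + 1) => s), f v
      = ∑ w ∈ Fintype.piFinset (fun _ : Fin r => s), ∑ x ∈ s, f (Fin.snoc w x) := by
  rw [sum_comm, ← sum_product']
  exact (Finset.sum_equiv (Fin.snocEquiv fun _ => α) (by simp [Fin.forall_fin_succ', and_comm])
    (fun _ _ => rfl)).symm

lemma sum_piFinset_append {A B : ℕ} (f : (Fin (A + B) → α) → M) :
    ∑ v ∈ Fintype.piFinset (fun _ : Fin (A + B) => s), f v
      = ∑ u ∈ Fintype.piFinset (fun _ : Fin A => s),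
          ∑ w ∈ Fintype.piFinset (fun _ : Fin B => s), f (Fin.append u w) := by
  rw [← sum_product']
  exact (Finset.sum_equiv (Fin.appendEquiv A B) (by simp [Fin.forall_fin_add])
    (fun _ _ => rfl)).symm

lemma sum_univ_append {A B : ℕ} (u : Fin A → M) (w : Fin B → M) :
    ∑ i, Fin.append u w i = ∑ i, u i + ∑ i, w i := by
  simp [Fin.sum_univ_add]

end TupleSums

section PartialSums
variable {M : Type*} [AddCommMonoid M] {r : ℕ}

def partialSum (l : Fin r → M) (j : Fin r) : M := ∑ i ∈ Iic j, l i

lemma partialSum_eq_sum_ite (l : Fin r → M) (j : Fin r) :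
    partialSum l j = ∑ i, if i ≤ j then l i else 0 := by
  rw [partialSum, ← sum_filter]
  congr 1
  ext
  simp

lemma partialSum_castSucc (l : Fin (r + 1) → M) (j : Fin r) :
    partialSum l j.castSucc = partialSum (Fin.init l) j := by
  rw [partialSum, ← Fin.map_castSuccEmb_Iic, sum_map]
  rfl

lemma partialSum_last (l : Fin (r + 1) → M) : partialSum l (Fin.last r) = ∑ i, l i := by
  simp [partialSum_eq_sum_ite, Fin.le_last]

lemma partialSum_cons_zero (x : M) (w : Fin r → M) : partialSum (Fin.cons x w) 0 = x := by
  simp [partialSum_eq_sum_ite]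

lemma partialSum_cons_succ (x : M) (w : Fin r → M) (j : Fin r) :
    partialSum (Fin.cons x w) j.succ = x + partialSum w j := by
  simp [partialSum_eq_sum_ite, Fin.sum_univ_succ]

lemma partialSum_append_castAdd {A B : ℕ} (u : Fin A → M) (w : Fin B → M) (j : Fin A) :
    partialSum (Fin.append u w) (Fin.castAdd B j) = partialSum u j := by
  rw [partialSum, ← Fin.map_castAddEmb_Iic, sum_map]
  simp only [Fin.castAddEmb_apply, Fin.append_left]
  rfl

lemma partialSum_append_natAdd {A B : ℕ} (u : Fin A → M) (w : Fin B → M) (j : Fin B) :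
    partialSum (Fin.append u w) (Fin.natAdd A j) = ∑ i, u i + partialSum w j := by
  have hle (i : Fin A) : Fin.castAdd B i ≤ Fin.natAdd A j :=
    Fin.le_def.2 (by simp only [Fin.val_castAdd, Fin.val_natAdd]; omega)
  simp only [partialSum_eq_sum_ite, Fin.sum_univ_add, Fin.append_left, Fin.append_right, hle,
    if_true, Fin.natAdd_le_natAdd_iff]

end PartialSums

lemma sum_Ico_ite_dvd_add {M : Type*} [AddCommMonoid M] {p S r : ℕ} (hS : S ≤ r * p)
    (f : ℕ → M) :
    ∑ x ∈ Ico 1 p, (if p ∣ S + x then f (S + x) else 0)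
      = ∑ i ∈ Icc 1 r, if (i - 1) * p < S ∧ S < i * p then f (i * p) else 0 := by
  rw [← sum_filter, ← sum_filter]
  refine sum_nbij' (fun x => (S + x) / p) (fun i => i * p - S) ?_ ?_ ?_ ?_ ?_
  all_goals simp only [mem_filter, mem_Ico, mem_Icc]
  · rintro x ⟨⟨hx1, hxp⟩, c, hc⟩
    rw [hc, Nat.mul_div_cancel_left _ (by omega)]
    have hc1 : 1 ≤ c := Nat.one_le_iff_ne_zero.2 (by rintro rfl; omega)
    have hcr : c < r + 1 :=
      Nat.lt_of_mul_lt_mul_left (a := p) (by rw [mul_add, mul_comm p r]; omega)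
    have : (c - 1) * p = p * c - p := by rw [Nat.sub_one_mul, mul_comm]
    have : p ≤ p * c := Nat.le_mul_of_pos_right p hc1
    exact ⟨⟨hc1, by omega⟩, by omega, by rw [mul_comm]; omega⟩
  · rintro i ⟨⟨hi1, hir⟩, hlo, hhi⟩
    have : (i - 1) * p = i * p - p := Nat.sub_one_mul i p
    exact ⟨⟨by omega, by omega⟩, by rw [Nat.add_sub_cancel' hhi.le]; exact dvd_mul_left p i⟩
  · rintro x ⟨⟨hx1, hxp⟩, c, hc⟩
    rw [hc, Nat.mul_div_cancel_left _ (by omega), mul_comm]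
    omega
  · rintro i ⟨-, -, hhi⟩
    have hp : 0 < p := Nat.pos_of_ne_zero (by rintro rfl; simp at hhi)
    rw [Nat.add_sub_cancel' hhi.le, Nat.mul_div_cancel _ hp]
  · rintro x ⟨⟨hx1, hxp⟩, c, hc⟩
    rw [hc, Nat.mul_div_cancel_left _ (by omega), mul_comm]

section Reciprocals
variable {p : ℕ}

lemma prod_inv_natCast_pow_eq_zero {ι : Type*} [Fintype ι] {s e : ι → ℕ} (he : ∀ j, e j ≠ 0)
    {j : ι} (hj : p ∣ s j) : ∏ i, ((s i : ZMod p))⁻¹ ^ e i = 0 :=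
  prod_eq_zero (mem_univ j) (by
    rw [(ZMod.natCast_eq_zero_iff _ _).2 hj, ZMod.inv_zero, zero_pow (he j)])

theorem OY_eq_sum {r : ℕ} {k : Fin r → ℕ} (hk : ∀ j, k j ≠ 0) :
    OY p r k = ∑ l ∈ Fintype.piFinset (fun _ : Fin r => Ico 1 p),
      C (∏ j, ((partialSum l j : ℕ) : ZMod p)⁻¹ ^ k j) * X ^ ∑ i, l i := by
  refine sum_congr rfl fun l _ => ite_eq_left_iff.2 fun h => ?_
  obtain ⟨j, hj⟩ := not_forall_not.1 h
  rw [prod_inv_natCast_pow_eq_zero hk hj, C_0, zero_mul]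

theorem Zi_eq_sum {r : ℕ} {k : Fin r → ℕ} (hk : ∀ j, k j ≠ 0) (i : ℕ) :
    Zi p r k i = ∑ l ∈ Fintype.piFinset (fun _ : Fin r => Ico 1 p),
      if (i - 1) * p < ∑ j, l j ∧ ∑ j, l j < i * p then
        ∏ j, ((partialSum l j : ℕ) : ZMod p)⁻¹ ^ k j
      else 0 := by
  refine sum_congr rfl fun l _ => ?_
  by_cases hdvd : ∀ j : Fin r, ¬ p ∣ ∑ i' ∈ Iic j, l i'
  · simp only [hdvd, not_false_eq_true, implies_true, and_true]
    rfl
  · obtain ⟨j, hj⟩ := not_forall_not.1 hdvd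
    simp only [hdvd, and_false, if_false,
      prod_inv_natCast_pow_eq_zero (s := partialSum l) hk hj, ite_self]

theorem OYmixed_eq_sum {a b c : ℕ} {lam : Fin a → ℕ} {mu : Fin b → ℕ} {nu : Fin c → ℕ}
    (hlam : ∀ x, lam x ≠ 0) (hmu : ∀ y, mu y ≠ 0) (hnu : ∀ z, nu z ≠ 0) :
    OYmixed p a b c lam mu nu =
      ∑ l ∈ Fintype.piFinset (fun _ : Fin a => Ico 1 p),
        ∑ m ∈ Fintype.piFinset (fun _ : Fin b => Ico 1 p),
          ∑ n ∈ Fintype.piFinset (fun _ : Fin c => Ico 1 p),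
            C ((∏ x, ((partialSum l x : ℕ) : ZMod p)⁻¹ ^ lam x) *
                (∏ y, ((partialSum m y : ℕ) : ZMod p)⁻¹ ^ mu y) *
                ∏ z, ((∑ i, l i + ∑ i, m i + partialSum n z : ℕ) : ZMod p)⁻¹ ^ nu z)
              * X ^ (∑ i, l i + ∑ i, m i + ∑ i, n i) := by
  refine sum_congr rfl fun l _ => sum_congr rfl fun m _ => sum_congr rfl fun n _ =>
    ite_eq_left_iff.2 fun h => ?_
  simp only [not_and_or, not_forall, not_not] at h
  rcases h with ⟨x, hx⟩ | ⟨y, hy⟩ | ⟨z, hz⟩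
  · rw [prod_inv_natCast_pow_eq_zero hlam hx]; simp
  · rw [prod_inv_natCast_pow_eq_zero hmu hy]; simp
  · rw [prod_inv_natCast_pow_eq_zero hnu hz]; simp

variable (p) in
def reciprocalProd {r : ℕ} (s : ℕ) (ν : Fin r → ℕ) : ZMod p :=
  ∏ z, ((s + partialSum ν z : ℕ) : ZMod p)⁻¹

variable {r : ℕ}

lemma prod_inv_partialSum (l : Fin r → ℕ) :
    ∏ j, ((partialSum l j : ℕ) : ZMod p)⁻¹ = reciprocalProd p 0 l := by
  simp [reciprocalProd]

lemma reciprocalProd_congr {s t : ℕ} (h : (s : ZMod p) = t) (ν : Fin r → ℕ) :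
    reciprocalProd p s ν = reciprocalProd p t ν := by
  simp only [reciprocalProd, Nat.cast_add, h]

lemma reciprocalProd_snoc (s : ℕ) (l : Fin r → ℕ) (x : ℕ) :
    reciprocalProd p s (Fin.snoc l x : Fin (r + 1) → ℕ)
      = reciprocalProd p s l * ((s + ∑ i, l i + x : ℕ) : ZMod p)⁻¹ := by
  rw [reciprocalProd, Fin.prod_univ_castSucc, partialSum_last]
  simp [partialSum_castSucc, reciprocalProd, Fin.sum_snoc, add_assoc]

lemma reciprocalProd_succ (s : ℕ) (l : Fin (r + 1) → ℕ) :
    reciprocalProd p s l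
      = reciprocalProd p s (Fin.init l) * ((s + ∑ i, l i : ℕ) : ZMod p)⁻¹ := by
  rw [← Fin.snoc_init_self l, reciprocalProd_snoc, Fin.sum_snoc, Fin.snoc_init_self, add_assoc]

lemma reciprocalProd_cons (s x : ℕ) (w : Fin r → ℕ) :
    reciprocalProd p s (Fin.cons x w : Fin (r + 1) → ℕ)
      = ((s + x : ℕ) : ZMod p)⁻¹ * reciprocalProd p (s + x) w := by
  simp [reciprocalProd, Fin.prod_univ_succ, partialSum_cons_zero, partialSum_cons_succ, add_assoc]

lemma reciprocalProd_append {A B : ℕ} (s : ℕ) (u : Fin A → ℕ) (w : Fin B → ℕ) :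
    reciprocalProd p s (Fin.append u w)
      = reciprocalProd p s u * reciprocalProd p (s + ∑ i, u i) w := by
  simp [reciprocalProd, Fin.prod_univ_add, partialSum_append_castAdd, partialSum_append_natAdd,
    add_assoc]

lemma reciprocalProd_fin_one (s x : ℕ) :
    reciprocalProd p s (fun _ : Fin 1 => x) = ((s + x : ℕ) : ZMod p)⁻¹ := by
  simp [reciprocalProd, partialSum]

theorem OY_ones_eq_sum :
    OY p r (fun _ => 1) = ∑ l ∈ Fintype.piFinset (fun _ : Fin r => Ico 1 p),
      C (reciprocalProd p 0 l) * X ^ ∑ i, l i := by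
  simp only [OY_eq_sum (fun _ => one_ne_zero), pow_one, prod_inv_partialSum]

theorem OYmixed_ones_eq_sum {a b c : ℕ} :
    OYmixed p a b c (fun _ => 1) (fun _ => 1) (fun _ => 1) =
      ∑ l ∈ Fintype.piFinset (fun _ : Fin a => Ico 1 p),
        ∑ m ∈ Fintype.piFinset (fun _ : Fin b => Ico 1 p),
          ∑ n ∈ Fintype.piFinset (fun _ : Fin c => Ico 1 p),
            C (reciprocalProd p 0 l * reciprocalProd p 0 m *
                reciprocalProd p (∑ i, l i + ∑ i, m i) n)
              * X ^ (∑ i, l i + ∑ i, m i + ∑ i, n i) := by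
  simp only [OYmixed_eq_sum (fun _ => one_ne_zero) (fun _ => one_ne_zero) (fun _ => one_ne_zero),
    pow_one, prod_inv_partialSum]
  rfl

end Reciprocals

section KernelSum
variable (p : ℕ)

noncomputable def kernelSum (a k : ℕ) (g : ZMod p → ZMod p → ZMod p) : (ZMod p)[X] :=
  ∑ l ∈ Fintype.piFinset (fun _ : Fin (a + 1) => Ico 1 p), ∑ m ∈ Ico 1 p,
    ∑ ν ∈ Fintype.piFinset (fun _ : Fin k => Ico 1 p),
      C (reciprocalProd p 0 (Fin.init l) * g (∑ i, l i : ℕ) m *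
          reciprocalProd p (∑ i, l i + m) ν) * X ^ (∑ i, l i + m + ∑ i, ν i)

variable {p} {a k : ℕ}

lemma kernelSum_add (g h : ZMod p → ZMod p → ZMod p) :
    kernelSum p a k (g + h) = kernelSum p a k g + kernelSum p a k h := by
  simp only [kernelSum, Pi.add_apply, mul_add, add_mul, map_add, sum_add_distrib]

lemma kernelSum_congr {g h : ZMod p → ZMod p → ZMod p}
    (hgh : ∀ A B, B ≠ 0 → g A B = h A B) :
    kernelSum p a k g = kernelSum p a k h := by
  refine sum_congr rfl fun l _ => sum_congr rfl fun m hm => ?_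
  rw [mem_Ico] at hm
  have hm0 : (m : ZMod p) ≠ 0 :=
    mt (ZMod.natCast_eq_zero_iff m p).1 (Nat.not_dvd_of_pos_of_lt hm.1 hm.2)
  simp only [hgh _ _ hm0]

theorem OYmixed_eq_kernelSum_inv_mul_inv :
    OYmixed p (a + 1) 1 k (fun _ => 1) (fun _ => 1) (fun _ => 1)
      = kernelSum p a k fun A B => A⁻¹ * B⁻¹ := by
  rw [OYmixed_ones_eq_sum]
  refine sum_congr rfl fun l _ => ?_
  rw [sum_piFinset_fin_one]
  refine sum_congr rfl fun m _ => sum_congr rfl fun ν _ => ?_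
  simp only [reciprocalProd_fin_one, reciprocalProd_succ 0 l, Fin.sum_univ_one, zero_add]
  congr 2
  ring

theorem OYmixed_eq_kernelSum_inv_mul_inv_add :
    OYmixed p a 1 (k + 1) (fun _ => 1) (fun _ => 1) (fun _ => 1)
      = kernelSum p a k fun A B => B⁻¹ * (A + B)⁻¹ := by
  rw [OYmixed_ones_eq_sum, kernelSum, sum_piFinset_snoc]
  refine sum_congr rfl fun l _ => ?_
  rw [sum_piFinset_fin_one]
  simp only [sum_piFinset_cons]
  rw [sum_comm]
  refine sum_congr rfl fun x _ => sum_congr rfl fun m _ => sum_congr rfl fun ν _ => ?_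
  simp only [reciprocalProd_fin_one, reciprocalProd_cons, Fin.init_snoc, Fin.sum_snoc,
    Fin.sum_univ_one, Fin.sum_cons, zero_add]
  rw [add_right_comm _ x m]
  congr 2
  · push_cast
    ring_nf
  · ring

theorem OY_eq_kernelSum_inv_mul_inv_add :
    OY p (a + 1 + 1 + k) (fun _ => 1) = kernelSum p a k fun A B => A⁻¹ * (A + B)⁻¹ := by
  rw [OY_ones_eq_sum, sum_piFinset_append, kernelSum, sum_piFinset_snoc]
  refine sum_congr rfl fun l _ => sum_congr rfl fun m _ => sum_congr rfl fun ν _ => ?_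
  simp only [reciprocalProd_append, reciprocalProd_snoc, reciprocalProd_succ 0 l, Fin.sum_snoc,
    sum_univ_append, zero_add]
  congr 2
  push_cast
  ring

end KernelSum

section CorrectionTerms
variable {p : ℕ}

lemma sum_le_mul_of_mem_piFinset {r : ℕ} {l : Fin r → ℕ}
    (hl : l ∈ Fintype.piFinset fun _ : Fin r => Ico 1 p) : ∑ j, l j ≤ r * p := by
  calc ∑ j, l j ≤ ∑ _j : Fin r, p :=
        sum_le_sum fun j _ => (mem_Ico.1 (Fintype.mem_piFinset.1 hl j)).2.le
    _ = r * p := by simp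

lemma sum_Icc_C_mul_X_pow_eq_sum_dvd {r : ℕ} (w : (Fin r → ℕ) → ZMod p) :
    ∑ i ∈ Icc 1 r, C (∑ l ∈ Fintype.piFinset (fun _ : Fin r => Ico 1 p),
        if (i - 1) * p < ∑ j, l j ∧ ∑ j, l j < i * p then w l else 0) * X ^ (i * p)
      = ∑ l ∈ Fintype.piFinset (fun _ : Fin r => Ico 1 p), ∑ x ∈ Ico 1 p,
          if p ∣ ∑ j, l j + x then C (w l) * X ^ (∑ j, l j + x) else 0 := by
  simp only [map_sum, sum_mul, apply_ite C, C_0, ite_mul, zero_mul]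
  rw [sum_comm]
  exact sum_congr rfl fun l hl =>
    (sum_Ico_ite_dvd_add (sum_le_mul_of_mem_piFinset hl) fun T => C (w l) * X ^ T).symm

variable {a k : ℕ}

theorem Zi_series_mul_OY_eq_kernelSum_ite_add_eq_zero :
    (∑ i ∈ Icc 1 (a + 1),
        C (Zi p (a + 1) (fun j => if (j : ℕ) = a then 2 else 1) i) * X ^ (i * p))
      * OY p k (fun _ => 1) = kernelSum p a k fun A B => if A + B = 0 then A⁻¹ ^ 2 else 0 := by
  have hw : ∀ l : Fin (a + 1) → ℕ,
      ∏ j, ((partialSum l j : ℕ) : ZMod p)⁻¹ ^ (if (j : ℕ) = a then 2 else 1)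
        = reciprocalProd p 0 (Fin.init l) * ((∑ i, l i : ℕ) : ZMod p)⁻¹ ^ 2 := by
    intro l
    rw [Fin.prod_univ_castSucc, Fin.val_last, if_pos rfl, partialSum_last, ← prod_inv_partialSum]
    congr 1
    refine prod_congr rfl fun x _ => ?_
    rw [Fin.val_castSucc, if_neg x.isLt.ne, pow_one, partialSum_castSucc]
  have hk : ∀ j : Fin (a + 1), (if (j : ℕ) = a then 2 else 1) ≠ 0 := fun j => by
    split_ifs <;> norm_num
  simp only [Zi_eq_sum hk, hw, sum_Icc_C_mul_X_pow_eq_sum_dvd, sum_mul, ite_mul, zero_mul,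
    kernelSum]
  refine sum_congr rfl fun l _ => sum_congr rfl fun m _ => ?_
  have hcast : ((∑ i, l i : ℕ) : ZMod p) + (m : ℕ) = 0 ↔ p ∣ ∑ i, l i + m := by
    rw [← Nat.cast_add, ZMod.natCast_eq_zero_iff]
  simp only [hcast]
  split_ifs with hdvd
  · rw [OY_ones_eq_sum, mul_sum]
    refine sum_congr rfl fun ν _ => ?_
    rw [reciprocalProd_congr (t := 0)
      (((ZMod.natCast_eq_zero_iff _ _).2 hdvd).trans Nat.cast_zero.symm)]
    simp only [C_mul, pow_add]
    ring
  · simp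

theorem Zi_series_mul_OY_eq_kernelSum_ite_eq_zero :
    (∑ i ∈ Icc 1 a, C (Zi p a (fun _ => 1) i) * X ^ (i * p))
      * OY p (k + 1) (fun j => if (j : ℕ) = 0 then 2 else 1)
      = kernelSum p a k fun A B => if A = 0 then B⁻¹ ^ 2 else 0 := by
  have hOY : OY p (k + 1) (fun j => if (j : ℕ) = 0 then 2 else 1)
      = ∑ m ∈ Ico 1 p, ∑ ν ∈ Fintype.piFinset (fun _ : Fin k => Ico 1 p),
          C (((m : ℕ) : ZMod p)⁻¹ ^ 2 * reciprocalProd p m ν) * X ^ (m + ∑ i, ν i) := by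
    rw [OY_eq_sum (fun j => by split_ifs <;> norm_num), sum_piFinset_cons]
    refine sum_congr rfl fun m _ => sum_congr rfl fun ν _ => ?_
    simp [Fin.prod_univ_succ, partialSum_cons_zero, partialSum_cons_succ, reciprocalProd,
      Fin.sum_cons]
  simp only [Zi_eq_sum (fun _ => one_ne_zero), pow_one, prod_inv_partialSum,
    sum_Icc_C_mul_X_pow_eq_sum_dvd, sum_mul, ite_mul, zero_mul, kernelSum, sum_piFinset_snoc]
  refine sum_congr rfl fun l _ => sum_congr rfl fun x _ => ?_
  have hcast : ((∑ i, l i + x : ℕ) : ZMod p) = 0 ↔ p ∣ ∑ i, l i + x :=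
    ZMod.natCast_eq_zero_iff _ _
  simp only [Fin.init_snoc, Fin.sum_snoc, hcast]
  split_ifs with hdvd
  · rw [hOY, mul_sum]
    refine sum_congr rfl fun m _ => ?_
    rw [mul_sum]
    refine sum_congr rfl fun ν _ => ?_
    have hshift : ((∑ i, l i + x + m : ℕ) : ZMod p) = (m : ℕ) := by
      rw [Nat.cast_add, (ZMod.natCast_eq_zero_iff _ _).2 hdvd, zero_add]
    rw [reciprocalProd_congr hshift]
    simp only [C_mul, pow_add]
    ring
  · simp

end CorrectionTerms

lemma inv_mul_inv_add_corrections {K : Type*} [Field K] [DecidableEq K] (A B : K) (hB : B ≠ 0) :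
    A⁻¹ * B⁻¹ + (if A + B = 0 then A⁻¹ ^ 2 else 0) + (if A = 0 then B⁻¹ ^ 2 else 0)
      = B⁻¹ * (A + B)⁻¹ + A⁻¹ * (A + B)⁻¹ := by
  by_cases hA : A = 0
  · simp only [hA, hB, zero_add, if_true, if_false, inv_zero, zero_mul, add_zero]
    ring
  by_cases hAB : A + B = 0
  · rw [eq_neg_of_add_eq_zero_right hAB]
    simp [hA]
    ring
  · simp only [hA, hAB, if_false, add_zero]
    field_simp

theorem telescoping_recurrence_general (p n : ℕ) (hp : p.Prime)
    (k : ℕ) (hk : k + 2 ≤ n) :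
    OYmixed p (n - k - 1) 1 k (fun _ => 1) (fun _ => 1) (fun _ => 1)
      = OYmixed p (n - k - 2) 1 (k + 1) (fun _ => 1) (fun _ => 1) (fun _ => 1)
        + OY p n (fun _ => 1)
        - (∑ i ∈ Finset.Icc 1 (n - k - 1),
            C (Zi p (n - k - 1) (fun j => if (j : ℕ) = n - k - 2 then 2 else 1) i) * X ^ (i * p))
          * OY p k (fun _ => 1)
        - (∑ i ∈ Finset.Icc 1 (n - k - 2),
            C (Zi p (n - k - 2) (fun _ => 1) i) * X ^ (i * p))
          * OY p (k + 1) (fun j => if (j : ℕ) = 0 then 2 else 1) := by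
  have := Fact.mk hp
  obtain ⟨a, ha⟩ : ∃ a, n - k - 2 = a := ⟨_, rfl⟩
  rw [ha, show n - k - 1 = a + 1 by omega, show n = a + 1 + 1 + k by omega,
    OYmixed_eq_kernelSum_inv_mul_inv, OYmixed_eq_kernelSum_inv_mul_inv_add,
    OY_eq_kernelSum_inv_mul_inv_add, Zi_series_mul_OY_eq_kernelSum_ite_add_eq_zero,
    Zi_series_mul_OY_eq_kernelSum_ite_eq_zero]
  have key := kernelSum_congr (p := p) (a := a) (k := k)
    (g := (fun A B => A⁻¹ * B⁻¹) + (fun A B => if A + B = 0 then A⁻¹ ^ 2 else 0) +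
      fun A B => if A = 0 then B⁻¹ ^ 2 else 0)
    (h := (fun A B => B⁻¹ * (A + B)⁻¹) + fun A B => A⁻¹ * (A + B)⁻¹)
    fun A B hB => inv_mul_inv_add_corrections A B hB
  rw [kernelSum_add, kernelSum_add, kernelSum_add] at key
  linear_combination key

theorem telescoping_recurrence (p n : ℕ) (hp : p.Prime) (h3 : 3 < p) (hn : n < p)
    (k : ℕ) (hk : k + 2 ≤ n) :
    OYmixed p (n - k - 1) 1 k (fun _ => 1) (fun _ => 1) (fun _ => 1)
      = OYmixed p (n - k - 2) 1 (k + 1) (fun _ => 1) (fun _ => 1) (fun _ => 1)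
        + OY p n (fun _ => 1)
        - (∑ i ∈ Finset.Icc 1 (n - k - 1),
            C (Zi p (n - k - 1) (fun j => if (j : ℕ) = n - k - 2 then 2 else 1) i) * X ^ (i * p))
          * OY p k (fun _ => 1)
        - (∑ i ∈ Finset.Icc 1 (n - k - 2),
            C (Zi p (n - k - 2) (fun _ => 1) i) * X ^ (i * p))
          * OY p (k + 1) (fun j => if (j : ℕ) = 0 then 2 else 1) :=
  telescoping_recurrence_general p n hp k hk
end
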